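/- In the diamond M_3 with the decoration x_0 = x_2 = 0, y_0 = p, x_1 = q, y_1 = 1, y_2 = r: the congruence Θ⁺(x_1 ∧ y_2, x_2) ∨ Θ⁺(y_2, x_2 ∨ y_1) is trivial, Θ⁺(x_0 ∧ y_1, x_1) ∨ Θ⁺(y_1, x_1 ∨ y_0) is trivial, but Θ⁺(x_0 ∧ y_2, x_2) ∨ Θ⁺(y_2, x_2 ∨ y_0) is nontrivial. -/

import Mathlib

/-- A lattice congruence on `L`: an equivalence relation compatible with `⊔` and `⊓`. -/
structure LatticeCongruence (L : Type*) [Lattice L] where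
  r : L → L → Prop
  refl : ∀ x, r x x
  symm : ∀ {x y}, r x y → r y x
  trans : ∀ {x y z}, r x y → r y z → r x z
  sup : ∀ {a b c d}, r a b → r c d → r (a ⊔ c) (b ⊔ d)
  inf : ∀ {a b c d}, r a b → r c d → r (a ⊓ c) (b ⊓ d)

namespace LatticeCongruence
variable {L : Type*} [Lattice L]

instance : PartialOrder (LatticeCongruence L) where
  le θ φ := ∀ x y, θ.r x y → φ.r x y
  le_refl θ := fun _ _ h => h
  le_trans θ φ ψ h1 h2 := fun x y h => h2 x y (h1 x y h)
  le_antisymm θ φ h1 h2 := by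
    cases θ; cases φ
    simp only [LatticeCongruence.mk.injEq]
    funext x y
    exact propext ⟨h1 x y, h2 x y⟩

instance : InfSet (LatticeCongruence L) where
  sInf S :=
  { r := fun x y => ∀ θ ∈ S, θ.r x y
    refl := fun x θ _ => θ.refl x
    symm := fun h θ hθ => θ.symm (h θ hθ)
    trans := fun h1 h2 θ hθ => θ.trans (h1 θ hθ) (h2 θ hθ)
    sup := fun h1 h2 θ hθ => θ.sup (h1 θ hθ) (h2 θ hθ)
    inf := fun h1 h2 θ hθ => θ.inf (h1 θ hθ) (h2 θ hθ) }

instance : CompleteLattice (LatticeCongruence L) :=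
  completeLatticeOfInf _ (fun _ =>
    ⟨fun θ hθ _ _ h => h θ hθ, fun _ hφ _ _ h θ hθ => hφ hθ _ _ h⟩)

end LatticeCongruence

/-- `theta a b` is the principal congruence generated by the pair `(a, b)`. -/
def theta {L : Type*} [Lattice L] (a b : L) : LatticeCongruence L :=
  sInf {θ : LatticeCongruence L | θ.r a b}

/-- `thetaPlus a b = Θ⁺(a,b) = Θ(a ⊓ b, a)`, the least congruence collapsing `a` below `b`. -/
def thetaPlus {L : Type*} [Lattice L] (a b : L) : LatticeCongruence L :=
  theta (a ⊓ b) a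

/-!
`Θ⁺(a, b)` is trivial exactly when `a ≤ b`, and a join of congruences is trivial exactly when
both joinands are. So the first two claims reduce to the comparabilities `q ⊓ r ≤ z`, `r ≤ o`,
`z ≤ q`, `o ≤ q ⊔ p`, and the third to `r ≰ p`, which holds because `p ⊓ r = z ≠ r`.
-/

namespace LatticeCongruence

def diag (L : Type*) [Lattice L] : LatticeCongruence L where
  r := Eq
  refl _ := rfl
  symm h := h.symm
  trans h₁ h₂ := h₁.trans h₂
  sup h₁ h₂ := by rw [h₁, h₂]
  inf h₁ h₂ := by rw [h₁, h₂]

theorem bot_r_iff {L : Type*} [Lattice L] {x y : L} : (⊥ : LatticeCongruence L).r x y ↔ x = y :=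
  ⟨fun h => h (diag L) trivial, fun h => h ▸ (⊥ : LatticeCongruence L).refl x⟩

end LatticeCongruence

section

variable {L : Type*} [Lattice L]

theorem theta_rel (a b : L) : (theta a b).r a b :=
  fun _ h => h

theorem theta_self (a : L) : theta a a = ⊥ :=
  le_antisymm (sInf_le ((⊥ : LatticeCongruence L).refl a)) bot_le

theorem theta_eq_bot_iff {a b : L} : theta a b = ⊥ ↔ a = b :=
  ⟨fun h => LatticeCongruence.bot_r_iff.mp (h ▸ theta_rel a b), fun h => h ▸ theta_self a⟩

theorem thetaPlus_eq_bot_iff {a b : L} : thetaPlus a b = ⊥ ↔ a ≤ b :=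
  theta_eq_bot_iff.trans inf_eq_left

end

theorem M3_decoration_congruences_general {M : Type*} [Lattice M] (z p q r o : M)
    (hzr : z ≠ r)
    (hpq_sup : p ⊔ q = o) (hqr_sup : q ⊔ r = o)
    (hpq_inf : p ⊓ q = z) (hqr_inf : q ⊓ r = z) (hpr_inf : p ⊓ r = z) :
    thetaPlus (q ⊓ r) z ⊔ thetaPlus r (z ⊔ o) = (⊥ : LatticeCongruence M) ∧
    thetaPlus (z ⊓ o) q ⊔ thetaPlus o (q ⊔ p) = (⊥ : LatticeCongruence M) ∧
    thetaPlus (z ⊓ r) z ⊔ thetaPlus r (z ⊔ p) ≠ (⊥ : LatticeCongruence M) := by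
  have hzp : z ≤ p := hpq_inf ▸ inf_le_left
  have hzq : z ≤ q := hpq_inf ▸ inf_le_right
  have hro : r ≤ o := hqr_sup ▸ le_sup_right
  simp only [ne_eq, sup_eq_bot_iff, thetaPlus_eq_bot_iff]
  refine ⟨⟨hqr_inf.le, le_sup_of_le_right hro⟩,
    ⟨inf_le_left.trans hzq, (sup_comm q p ▸ hpq_sup).ge⟩, fun ⟨_, hr⟩ => hzr ?_⟩
  have hrp : r ≤ p := hr.trans (sup_le hzp le_rfl)
  exact hpr_inf.symm.trans (inf_eq_right.mpr hrp)

/-- In the diamond `M₃ = {z, p, q, r, o}` with the decoration `x₀ = x₂ = z`, `y₀ = p`,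
`x₁ = q`, `y₁ = o`, `y₂ = r`: the congruences
`Θ⁺(x₁ ⊓ y₂, x₂) ⊔ Θ⁺(y₂, x₂ ⊔ y₁)` and `Θ⁺(x₀ ⊓ y₁, x₁) ⊔ Θ⁺(y₁, x₁ ⊔ y₀)` are trivial,
but `Θ⁺(x₀ ⊓ y₂, x₂) ⊔ Θ⁺(y₂, x₂ ⊔ y₀)` is nontrivial. -/
theorem M3_decoration_congruences {M : Type*} [Lattice M] (z p q r o : M)
    (hcarrier : ∀ t : M, t = z ∨ t = p ∨ t = q ∨ t = r ∨ t = o)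
    (hzp : z ≠ p) (hzq : z ≠ q) (hzr : z ≠ r) (hzo : z ≠ o)
    (hpq : p ≠ q) (hpr : p ≠ r) (hpo : p ≠ o)
    (hqr : q ≠ r) (hqo : q ≠ o) (hro : r ≠ o)
    (hpq_sup : p ⊔ q = o) (hqr_sup : q ⊔ r = o) (hpr_sup : p ⊔ r = o)
    (hpq_inf : p ⊓ q = z) (hqr_inf : q ⊓ r = z) (hpr_inf : p ⊓ r = z) :
    thetaPlus (q ⊓ r) z ⊔ thetaPlus r (z ⊔ o) = (⊥ : LatticeCongruence M) ∧
    thetaPlus (z ⊓ o) q ⊔ thetaPlus o (q ⊔ p) = (⊥ : LatticeCongruence M) ∧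
    thetaPlus (z ⊓ r) z ⊔ thetaPlus r (z ⊔ p) ≠ (⊥ : LatticeCongruence M) :=
  M3_decoration_congruences_general z p q r o hzr hpq_sup hqr_sup hpq_inf hqr_inf hpr_inf
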